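/- arXiv:1907.01964 — 3 statements merged into one kernel-verified Lean document; each statement's English description precedes it below -/
import Mathlib

section
/- Let F, G : ℝ⁴ → ℝ be smooth functions of the variables (w, z, x, y). Define the second-order operator Q = ∂_w∂_x − ∂_z∂_y + F_y ∂_x² − G_x ∂_y² − (F_x − G_y) ∂_x∂_y, and set f₁ = −Q(G), f₂ = Q(F) (functions of (w,z,x,y)). Consider the vector fields on ℝ⁵ with coordinates (w, z, x, y, λ): X₁ = ∂_z − λ∂_x + F_x ∂_x + G_x ∂_y + f₁ ∂_λ and X₂ = ∂_w − λ∂_y + F_y ∂_x + G_y ∂_y + f₂ ∂_λ. Then the Lie bracket [X₁, X₂] vanishes identically (for all values of (w,z,x,y,λ)) if and only if F and G satisfy the coupled system of third-order PDEs: ∂_x(Q(F)) + ∂_y(Q(G)) = 0 and (∂_w + F_y ∂_x + G_y ∂_y)(Q(G)) + (∂_z + F_x ∂_x + G_x ∂_y)(Q(F)) = 0. -/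
open scoped ContDiff

/-- Partial derivative in the `i`-th coordinate direction on `ℝᵏ`. -/
noncomputable def pd {k : ℕ} (i : Fin k) (f : (Fin k → ℝ) → ℝ) (p : Fin k → ℝ) : ℝ :=
  fderiv ℝ f p (Pi.single i 1)

/-- Action of a vector field `X` (a map `ℝᵏ → ℝᵏ`) on a function, as a first-order
differential operator: `(X f)(p) = ∑ᵢ Xᵢ(p) ∂ᵢf(p) = Df(p)[X(p)]`. -/
noncomputable def vfAct {k : ℕ} (X : (Fin k → ℝ) → (Fin k → ℝ))
    (f : (Fin k → ℝ) → ℝ) (p : Fin k → ℝ) : ℝ :=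
  fderiv ℝ f p (X p)

/-- Coordinates on `ℝ⁴`: `w = 0`, `z = 1`, `x = 2`, `y = 3`.  The second-order operator
`Q = ∂_w∂_x − ∂_z∂_y + F_y ∂_x² − G_x ∂_y² − (F_x − G_y) ∂_x∂_y` applied to `H`. -/
noncomputable def Qop (F G H : (Fin 4 → ℝ) → ℝ) (p : Fin 4 → ℝ) : ℝ :=
  pd 0 (pd 2 H) p - pd 1 (pd 3 H) p + pd 3 F p * pd 2 (pd 2 H) p
    - pd 2 G p * pd 3 (pd 3 H) p - (pd 2 F p - pd 3 G p) * pd 3 (pd 2 H) p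

/-- Projection `ℝ⁵ → ℝ⁴` forgetting the last (spectral) coordinate `λ = 4`. -/
def proj45 (p : Fin 5 → ℝ) : Fin 4 → ℝ := fun i => p i.castSucc

/-! ### Auxiliary machinery -/

namespace LaxAux

lemma infp1 : (∞ : WithTop ℕ∞) + 1 ≤ ∞ := by norm_num

lemma contDiff_pd {k : ℕ} (i : Fin k) {f : (Fin k → ℝ) → ℝ} (hf : ContDiff ℝ ∞ f) :
    ContDiff ℝ ∞ (pd i f) :=
  (hf.fderiv_right infp1).clm_apply contDiff_const

lemma fderiv_eq_sum_pd {k : ℕ} (g : (Fin k → ℝ) → ℝ) (q : Fin k → ℝ) (v : Fin k → ℝ) :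
    fderiv ℝ g q v = ∑ i, v i * pd i g q := by
  have hv : v = ∑ i, v i • (Pi.single i (1:ℝ) : Fin k → ℝ) := by
    funext j
    simp [Pi.single_apply, Finset.sum_apply]
  calc fderiv ℝ g q v = fderiv ℝ g q (∑ i, v i • (Pi.single i (1:ℝ) : Fin k → ℝ)) := by
        rw [← hv]
    _ = ∑ i, v i * pd i g q := by
        rw [map_sum]
        simp [pd, smul_eq_mul]

lemma pd_comm {k : ℕ} {f : (Fin k → ℝ) → ℝ} (hf : ContDiff ℝ ∞ f) (i j : Fin k)
    (q : Fin k → ℝ) : pd i (pd j f) q = pd j (pd i f) q := by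
  have hdf : Differentiable ℝ (fderiv ℝ f) :=
    (hf.fderiv_right infp1).differentiable (by norm_num)
  have key : ∀ v w, fderiv ℝ (fderiv ℝ f) q v w = fderiv ℝ (fderiv ℝ f) q w v := by
    intro v w
    exact second_derivative_symmetric
      (fun y => (hf.differentiable (by norm_num) y).hasFDerivAt)
      (hdf q).hasFDerivAt v w
  have expand : ∀ (a b : Fin k),
      pd a (pd b f) q = fderiv ℝ (fderiv ℝ f) q (Pi.single a 1) (Pi.single b 1) := by
    intro a b
    have h1 : pd b f = fun x => (fderiv ℝ f x) (Pi.single b 1) := rfl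
    rw [pd, h1, fderiv_clm_apply (hdf q) (differentiableAt_const _)]
    simp
  rw [expand, expand, key]

/-- The projection `proj45` as a continuous linear map. -/
noncomputable def L : (Fin 5 → ℝ) →L[ℝ] (Fin 4 → ℝ) :=
  ContinuousLinearMap.pi fun i => ContinuousLinearMap.proj i.castSucc

/-- The last-coordinate projection as a continuous linear map. -/
noncomputable def P4 : (Fin 5 → ℝ) →L[ℝ] ℝ :=
  ContinuousLinearMap.proj (R := ℝ) (φ := fun _ : Fin 5 => ℝ) (4 : Fin 5)

lemma hP4 (p : Fin 5 → ℝ) : HasFDerivAt (fun p : Fin 5 → ℝ => p 4) P4 p :=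
  ContinuousLinearMap.hasFDerivAt P4

lemma contDiff_comp_proj {g : (Fin 4 → ℝ) → ℝ} (hg : ContDiff ℝ ∞ g) :
    ContDiff ℝ ∞ (fun p => g (proj45 p)) :=
  hg.comp L.contDiff

lemma diff_comp_proj {g : (Fin 4 → ℝ) → ℝ} (hg : ContDiff ℝ ∞ g) :
    Differentiable ℝ (fun p => g (proj45 p)) :=
  (contDiff_comp_proj hg).differentiable (by norm_num)

lemma fderiv_comp_proj (g : (Fin 4 → ℝ) → ℝ) (hg : Differentiable ℝ g) (p v : Fin 5 → ℝ) :
    fderiv ℝ (fun p => g (proj45 p)) p v = fderiv ℝ g (proj45 p) (proj45 v) := by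
  have h1 : HasFDerivAt (fun p => g (proj45 p)) ((fderiv ℝ g (proj45 p)).comp L) p :=
    (hg (proj45 p)).hasFDerivAt.comp p L.hasFDerivAt
  rw [h1.fderiv]
  rfl

/-- Directional derivative of `g ∘ proj45` along an explicit 5-vector. -/
lemma key_expand (g : (Fin 4 → ℝ) → ℝ) (hg : Differentiable ℝ g) (p : Fin 5 → ℝ)
    (a b c d e : ℝ) :
    fderiv ℝ (fun p => g (proj45 p)) p ![a, b, c, d, e] =
      a * pd 0 g (proj45 p) + b * pd 1 g (proj45 p) + c * pd 2 g (proj45 p)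
        + d * pd 3 g (proj45 p) := by
  rw [fderiv_comp_proj g hg p _, fderiv_eq_sum_pd, Fin.sum_univ_four]
  rfl

lemma key_expand_sub (g : (Fin 4 → ℝ) → ℝ) (hg : ContDiff ℝ ∞ g) (p : Fin 5 → ℝ)
    (a b c d e : ℝ) :
    fderiv ℝ (fun p => g (proj45 p) - p 4) p ![a, b, c, d, e] =
      a * pd 0 g (proj45 p) + b * pd 1 g (proj45 p) + c * pd 2 g (proj45 p)
        + d * pd 3 g (proj45 p) - e := by
  have h1 : DifferentiableAt ℝ (fun p => g (proj45 p)) p := diff_comp_proj hg p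
  have h2 : DifferentiableAt ℝ (fun p : Fin 5 → ℝ => p 4) p := (hP4 p).differentiableAt
  rw [fderiv_fun_sub h1 h2, ContinuousLinearMap.sub_apply,
    key_expand g (hg.differentiable (by norm_num)) p, (hP4 p).fderiv]
  rfl

lemma key_expand_neg (g : (Fin 4 → ℝ) → ℝ) (hg : Differentiable ℝ g) (p : Fin 5 → ℝ)
    (a b c d e : ℝ) :
    fderiv ℝ (fun p => -(g (proj45 p))) p ![a, b, c, d, e] =
      -(a * pd 0 g (proj45 p) + b * pd 1 g (proj45 p) + c * pd 2 g (proj45 p)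
        + d * pd 3 g (proj45 p)) := by
  rw [fderiv_fun_neg, ContinuousLinearMap.neg_apply, key_expand g hg p]

lemma fderiv_apply_comp_proj (X : (Fin 5 → ℝ) → (Fin 5 → ℝ)) (p : Fin 5 → ℝ)
    (hX : DifferentiableAt ℝ X p) (v : Fin 5 → ℝ) (i : Fin 5) :
    fderiv ℝ X p v i = fderiv ℝ (fun p => X p i) p v := by
  have h := ((ContinuousLinearMap.proj (R := ℝ) (φ := fun _ : Fin 5 => ℝ)
      i).hasFDerivAt.comp p hX.hasFDerivAt).fderiv
  have h2 : (fun p => X p i)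
      = (⇑(ContinuousLinearMap.proj (R := ℝ) (φ := fun _ : Fin 5 => ℝ) i)) ∘ X := rfl
  rw [h2, h]
  rfl

/-- The general second-order expansion of an iterated vector field action. -/
lemma vf_second (X Y : (Fin 5 → ℝ) → (Fin 5 → ℝ)) (hX : Differentiable ℝ X)
    (hY : Differentiable ℝ Y) {h : (Fin 5 → ℝ) → ℝ} (hh : ContDiff ℝ ∞ h) (p : Fin 5 → ℝ) :
    vfAct X (vfAct Y h) p
      = fderiv ℝ (fderiv ℝ h) p (X p) (Y p) + fderiv ℝ h p (fderiv ℝ Y p (X p)) := by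
  have hh' : Differentiable ℝ (fderiv ℝ h) := (hh.fderiv_right infp1).differentiable (by norm_num)
  have hrw : vfAct Y h = fun p => (fderiv ℝ h p) (Y p) := rfl
  rw [vfAct, hrw, fderiv_clm_apply (hh' p) (hY p)]
  simp
  ring

/-- Lie bracket formula: second derivatives cancel by symmetry. -/
lemma bracket_eq (X Y : (Fin 5 → ℝ) → (Fin 5 → ℝ)) (hX : Differentiable ℝ X)
    (hY : Differentiable ℝ Y) {h : (Fin 5 → ℝ) → ℝ} (hh : ContDiff ℝ ∞ h) (p : Fin 5 → ℝ) :
    vfAct X (vfAct Y h) p - vfAct Y (vfAct X h) p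
      = fderiv ℝ h p (fderiv ℝ Y p (X p)) - fderiv ℝ h p (fderiv ℝ X p (Y p)) := by
  have hh' : Differentiable ℝ (fderiv ℝ h) := (hh.fderiv_right infp1).differentiable (by norm_num)
  have sym := second_derivative_symmetric
    (fun y => (hh.differentiable (by norm_num) y).hasFDerivAt) (hh' p).hasFDerivAt (X p) (Y p)
  rw [vf_second X Y hX hY hh p, vf_second Y X hY hX hh p, sym]
  ring

end LaxAux

open LaxAux

/-- The Lie bracket of the dispersionless Lax pair
`X₁ = ∂_z − λ∂_x + F_x∂_x + G_x∂_y + f₁∂_λ`,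
`X₂ = ∂_w − λ∂_y + F_y∂_x + G_y∂_y + f₂∂_λ`, with `f₁ = −Q(G)`, `f₂ = Q(F)`,
vanishes identically iff `F`, `G` satisfy the coupled third-order system
`∂_x(Q(F)) + ∂_y(Q(G)) = 0` and
`(∂_w + F_y∂_x + G_y∂_y)(Q(G)) + (∂_z + F_x∂_x + G_x∂_y)(Q(F)) = 0`. -/
theorem stmt0 (F G : (Fin 4 → ℝ) → ℝ)
    (hF : ContDiff ℝ (⊤ : ℕ∞) F) (hG : ContDiff ℝ (⊤ : ℕ∞) G)
    (f₁ f₂ : (Fin 4 → ℝ) → ℝ)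
    (hf₁ : f₁ = fun q => -(Qop F G G q)) (hf₂ : f₂ = fun q => Qop F G F q)
    (X₁ X₂ : (Fin 5 → ℝ) → (Fin 5 → ℝ))
    (hX₁ : X₁ = fun p =>
      ![0, 1, pd 2 F (proj45 p) - p 4, pd 2 G (proj45 p), f₁ (proj45 p)])
    (hX₂ : X₂ = fun p =>
      ![1, 0, pd 3 F (proj45 p), pd 3 G (proj45 p) - p 4, f₂ (proj45 p)]) :
    (∀ h : (Fin 5 → ℝ) → ℝ, ContDiff ℝ (⊤ : ℕ∞) h → ∀ p : Fin 5 → ℝ,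
        vfAct X₁ (vfAct X₂ h) p - vfAct X₂ (vfAct X₁ h) p = 0) ↔
    (∀ q : Fin 4 → ℝ,
      pd 2 (Qop F G F) q + pd 3 (Qop F G G) q = 0 ∧
      (pd 0 (Qop F G G) q + pd 3 F q * pd 2 (Qop F G G) q + pd 3 G q * pd 3 (Qop F G G) q)
        + (pd 1 (Qop F G F) q + pd 2 F q * pd 2 (Qop F G F) q
            + pd 2 G q * pd 3 (Qop F G F) q) = 0) := by
  subst hf₁ hf₂ hX₁ hX₂
  have hF' : ContDiff ℝ ∞ F := hF.of_le (by simp)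
  have hG' : ContDiff ℝ ∞ G := hG.of_le (by simp)
  have hQF : ContDiff ℝ ∞ (Qop F G F) := by
    unfold Qop
    exact ((((contDiff_pd 0 (contDiff_pd 2 hF')).sub (contDiff_pd 1 (contDiff_pd 3 hF'))).add
        ((contDiff_pd 3 hF').mul (contDiff_pd 2 (contDiff_pd 2 hF')))).sub
        ((contDiff_pd 2 hG').mul (contDiff_pd 3 (contDiff_pd 3 hF')))).sub
        (((contDiff_pd 2 hF').sub (contDiff_pd 3 hG')).mul (contDiff_pd 3 (contDiff_pd 2 hF')))
  have hQG : ContDiff ℝ ∞ (Qop F G G) := by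
    unfold Qop
    exact ((((contDiff_pd 0 (contDiff_pd 2 hG')).sub (contDiff_pd 1 (contDiff_pd 3 hG'))).add
        ((contDiff_pd 3 hF').mul (contDiff_pd 2 (contDiff_pd 2 hG')))).sub
        ((contDiff_pd 2 hG').mul (contDiff_pd 3 (contDiff_pd 3 hG')))).sub
        (((contDiff_pd 2 hF').sub (contDiff_pd 3 hG')).mul (contDiff_pd 3 (contDiff_pd 2 hG')))
  -- smoothness of the components of the vector fields
  have hc1 : ∀ i : Fin 5, ContDiff ℝ ∞ (fun p =>
      (![0, 1, pd 2 F (proj45 p) - p 4, pd 2 G (proj45 p),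
        (fun q => -(Qop F G G q)) (proj45 p)] : Fin 5 → ℝ) i) := by
    intro i
    fin_cases i
    · exact contDiff_const
    · exact contDiff_const
    · exact (contDiff_comp_proj (contDiff_pd 2 hF')).sub P4.contDiff
    · exact contDiff_comp_proj (contDiff_pd 2 hG')
    · exact (contDiff_comp_proj hQG).neg
  have hc2 : ∀ i : Fin 5, ContDiff ℝ ∞ (fun p =>
      (![1, 0, pd 3 F (proj45 p), pd 3 G (proj45 p) - p 4,
        (fun q => Qop F G F q) (proj45 p)] : Fin 5 → ℝ) i) := by
    intro i
    fin_cases i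
    · exact contDiff_const
    · exact contDiff_const
    · exact contDiff_comp_proj (contDiff_pd 3 hF')
    · exact (contDiff_comp_proj (contDiff_pd 3 hG')).sub P4.contDiff
    · exact contDiff_comp_proj hQF
  have hX1d : Differentiable ℝ (fun p =>
      (![0, 1, pd 2 F (proj45 p) - p 4, pd 2 G (proj45 p),
        (fun q => -(Qop F G G q)) (proj45 p)] : Fin 5 → ℝ)) :=
    (contDiff_pi.mpr hc1).differentiable (by norm_num)
  have hX2d : Differentiable ℝ (fun p =>
      (![1, 0, pd 3 F (proj45 p), pd 3 G (proj45 p) - p 4,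
        (fun q => Qop F G F q) (proj45 p)] : Fin 5 → ℝ)) :=
    (contDiff_pi.mpr hc2).differentiable (by norm_num)
  constructor
  · -- bracket vanishes → PDE system
    intro Hbr q
    have h4smooth : ContDiff ℝ (⊤ : ℕ∞) (fun p : Fin 5 → ℝ => p 4) := P4.contDiff
    have HB := Hbr _ h4smooth
    have e2 : vfAct (fun p =>
        (![1, 0, pd 3 F (proj45 p), pd 3 G (proj45 p) - p 4,
          (fun q => Qop F G F q) (proj45 p)] : Fin 5 → ℝ)) (fun p : Fin 5 → ℝ => p 4)
        = fun p => Qop F G F (proj45 p) := by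
      funext p
      rw [vfAct, (hP4 p).fderiv]
      rfl
    have e1 : vfAct (fun p =>
        (![0, 1, pd 2 F (proj45 p) - p 4, pd 2 G (proj45 p),
          (fun q => -(Qop F G G q)) (proj45 p)] : Fin 5 → ℝ)) (fun p : Fin 5 → ℝ => p 4)
        = fun p => -(Qop F G G (proj45 p)) := by
      funext p
      rw [vfAct, (hP4 p).fderiv]
      rfl
    rw [e1, e2] at HB
    have val : ∀ p : Fin 5 → ℝ,
        vfAct (fun p =>
          (![0, 1, pd 2 F (proj45 p) - p 4, pd 2 G (proj45 p),
            (fun q => -(Qop F G G q)) (proj45 p)] : Fin 5 → ℝ))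
          (fun p => Qop F G F (proj45 p)) p
        - vfAct (fun p =>
          (![1, 0, pd 3 F (proj45 p), pd 3 G (proj45 p) - p 4,
            (fun q => Qop F G F q) (proj45 p)] : Fin 5 → ℝ))
          (fun p => -(Qop F G G (proj45 p))) p
        = ((pd 0 (Qop F G G) (proj45 p) + pd 3 F (proj45 p) * pd 2 (Qop F G G) (proj45 p)
              + pd 3 G (proj45 p) * pd 3 (Qop F G G) (proj45 p))
            + (pd 1 (Qop F G F) (proj45 p) + pd 2 F (proj45 p) * pd 2 (Qop F G F) (proj45 p)
              + pd 2 G (proj45 p) * pd 3 (Qop F G F) (proj45 p)))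
          - p 4 * (pd 2 (Qop F G F) (proj45 p) + pd 3 (Qop F G G) (proj45 p)) := by
      intro p
      show fderiv ℝ (fun p => Qop F G F (proj45 p)) p
          ![0, 1, pd 2 F (proj45 p) - p 4, pd 2 G (proj45 p), -(Qop F G G (proj45 p))]
        - fderiv ℝ (fun p => -(Qop F G G (proj45 p))) p
          ![1, 0, pd 3 F (proj45 p), pd 3 G (proj45 p) - p 4, Qop F G F (proj45 p)] = _
      rw [key_expand (Qop F G F) (hQF.differentiable (by norm_num)) p,
        key_expand_neg (Qop F G G) (hQG.differentiable (by norm_num)) p]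
      ring
    have H0 := HB (Fin.snoc q 0)
    have H1 := HB (Fin.snoc q 1)
    rw [val] at H0 H1
    have hq : ∀ c : ℝ, proj45 (Fin.snoc q c) = q := by
      intro c
      funext i
      simp [proj45, Fin.snoc_castSucc]
    have h40 : (Fin.snoc q (0:ℝ) : Fin 5 → ℝ) 4 = 0 := by
      show (Fin.snoc q (0:ℝ) : Fin 5 → ℝ) (Fin.last 4) = 0
      exact Fin.snoc_last _ _
    have h41 : (Fin.snoc q (1:ℝ) : Fin 5 → ℝ) 4 = 1 := by
      show (Fin.snoc q (1:ℝ) : Fin 5 → ℝ) (Fin.last 4) = 1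
      exact Fin.snoc_last _ _
    rw [hq, h40] at H0
    rw [hq, h41] at H1
    constructor
    · linarith
    · linarith
  · -- PDE system → bracket vanishes
    intro Hq h hh p
    rw [bracket_eq _ _ hX1d hX2d (hh.of_le (by simp)) p]
    have hZ : fderiv ℝ (fun p =>
        (![1, 0, pd 3 F (proj45 p), pd 3 G (proj45 p) - p 4,
          (fun q => Qop F G F q) (proj45 p)] : Fin 5 → ℝ)) p
        ((fun p => (![0, 1, pd 2 F (proj45 p) - p 4, pd 2 G (proj45 p),
          (fun q => -(Qop F G G q)) (proj45 p)] : Fin 5 → ℝ)) p)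
        = fderiv ℝ (fun p =>
        (![0, 1, pd 2 F (proj45 p) - p 4, pd 2 G (proj45 p),
          (fun q => -(Qop F G G q)) (proj45 p)] : Fin 5 → ℝ)) p
        ((fun p => (![1, 0, pd 3 F (proj45 p), pd 3 G (proj45 p) - p 4,
          (fun q => Qop F G F q) (proj45 p)] : Fin 5 → ℝ)) p) := by
      funext i
      rw [fderiv_apply_comp_proj _ p (hX2d p) _ i, fderiv_apply_comp_proj _ p (hX1d p) _ i]
      have HA := (Hq (proj45 p)).1
      have HBq := (Hq (proj45 p)).2
      fin_cases i
      · -- component 0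
        show fderiv ℝ (fun _ : Fin 5 → ℝ => (1:ℝ)) p _
          = fderiv ℝ (fun _ : Fin 5 → ℝ => (0:ℝ)) p _
        simp
      · -- component 1
        show fderiv ℝ (fun _ : Fin 5 → ℝ => (0:ℝ)) p _
          = fderiv ℝ (fun _ : Fin 5 → ℝ => (1:ℝ)) p _
        simp
      · -- component 2
        show fderiv ℝ (fun p => pd 3 F (proj45 p)) p
            ![0, 1, pd 2 F (proj45 p) - p 4, pd 2 G (proj45 p), -(Qop F G G (proj45 p))]
          = fderiv ℝ (fun p => pd 2 F (proj45 p) - p 4) p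
            ![1, 0, pd 3 F (proj45 p), pd 3 G (proj45 p) - p 4, Qop F G F (proj45 p)]
        rw [key_expand (pd 3 F) ((contDiff_pd 3 hF').differentiable (by norm_num)) p,
          key_expand_sub (pd 2 F) (contDiff_pd 2 hF') p]
        rw [pd_comm hF' 2 3 (proj45 p)]
        simp only [Qop]
        ring
      · -- component 3
        show fderiv ℝ (fun p => pd 3 G (proj45 p) - p 4) p
            ![0, 1, pd 2 F (proj45 p) - p 4, pd 2 G (proj45 p), -(Qop F G G (proj45 p))]
          = fderiv ℝ (fun p => pd 2 G (proj45 p)) p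
            ![1, 0, pd 3 F (proj45 p), pd 3 G (proj45 p) - p 4, Qop F G F (proj45 p)]
        rw [key_expand_sub (pd 3 G) (contDiff_pd 3 hG') p,
          key_expand (pd 2 G) ((contDiff_pd 2 hG').differentiable (by norm_num)) p]
        rw [pd_comm hG' 2 3 (proj45 p)]
        simp only [Qop]
        ring
      · -- component 4
        show fderiv ℝ (fun p => Qop F G F (proj45 p)) p
            ![0, 1, pd 2 F (proj45 p) - p 4, pd 2 G (proj45 p), -(Qop F G G (proj45 p))]
          = fderiv ℝ (fun p => -(Qop F G G (proj45 p))) p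
            ![1, 0, pd 3 F (proj45 p), pd 3 G (proj45 p) - p 4, Qop F G F (proj45 p)]
        rw [key_expand (Qop F G F) (hQF.differentiable (by norm_num)) p,
          key_expand_neg (Qop F G G) (hQG.differentiable (by norm_num)) p]
        linear_combination HBq - p 4 * HA
    rw [hZ, sub_self]
end

section
/- Let u, v : ℝ³ → ℝ be smooth functions of (x, y, t). Consider the vector fields on ℝ⁴ with coordinates (x, y, t, λ): X₁ = ∂_y − (λ − v_x)∂_x + u_x ∂_λ and X₂ = ∂_t − (λ² − v_x λ + u − v_y)∂_x + (u_x λ + u_y)∂_λ. Then [X₁, X₂] = 0 identically (for all (x,y,t,λ)) if and only if (u, v) satisfies the Manakov–Santini system: u_{xt} = u_{yy} + (u u_x)_x + v_x u_{xy} − u_{xx} v_y and v_{xt} = v_{yy} + u v_{xx} + v_x v_{xy} − v_{xx} v_y. -/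
/-- Projection `ℝ⁴ → ℝ³` forgetting the last (spectral) coordinate `λ = 3`;
coordinates on `ℝ³`: `x = 0`, `y = 1`, `t = 2`. -/
def proj34 (p : Fin 4 → ℝ) : Fin 3 → ℝ := fun i => p i.castSucc

-- expand a CLM on the standard basis
lemma clm_apply_eq_sum {k : ℕ} (L : (Fin k → ℝ) →L[ℝ] ℝ) (w : Fin k → ℝ) :
    L w = ∑ i, w i * L (Pi.single i 1) := by
  conv_lhs => rw [← Finset.univ_sum_single w]
  rw [map_sum]
  refine Finset.sum_congr rfl fun i _ => ?_
  have : Pi.single i (w i) = w i • (Pi.single i (1:ℝ) : Fin k → ℝ) := by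
    funext j
    by_cases hji : j = i
    · subst hji; simp
    · simp [Pi.single_apply, hji]
  rw [this, map_smul, smul_eq_mul]

lemma contDiff_pd {k : ℕ} (i : Fin k) {f : (Fin k → ℝ) → ℝ} (hf : ContDiff ℝ (⊤ : ℕ∞) f) :
    ContDiff ℝ (⊤ : ℕ∞) (pd i f) :=
  (hf.fderiv_right (by simp)).clm_apply contDiff_const

-- proj34 as CLM
noncomputable def proj34L : (Fin 4 → ℝ) →L[ℝ] (Fin 3 → ℝ) :=
  ContinuousLinearMap.pi fun i => ContinuousLinearMap.proj i.castSucc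

lemma proj34_eq (p : Fin 4 → ℝ) : proj34 p = proj34L p := rfl

lemma hasFDerivAt_pd {k : ℕ} {f : (Fin k → ℝ) → ℝ} (hf : ContDiff ℝ (⊤ : ℕ∞) f) (i : Fin k)
    (p : Fin k → ℝ) :
    HasFDerivAt (pd i f) ((fderiv ℝ (fderiv ℝ f) p).flip (Pi.single i 1)) p := by
  have h1 : HasFDerivAt (fderiv ℝ f) (fderiv ℝ (fderiv ℝ f) p) p :=
    ((hf.fderiv_right (m := (⊤ : ℕ∞)) (by simp)).differentiable (by simp) p).hasFDerivAt
  have h2 : HasFDerivAt (fun _ : Fin k → ℝ => (Pi.single i 1 : Fin k → ℝ))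
      (0 : (Fin k → ℝ) →L[ℝ] (Fin k → ℝ)) p := hasFDerivAt_const _ _
  have := h1.clm_apply h2
  exact (by simpa using this : HasFDerivAt (fun y => fderiv ℝ f y (Pi.single i 1))
    ((fderiv ℝ (fderiv ℝ f) p).flip (Pi.single i 1)) p)

lemma pd_comm {k : ℕ} {f : (Fin k → ℝ) → ℝ} (hf : ContDiff ℝ (⊤ : ℕ∞) f) (i j : Fin k)
    (q : Fin k → ℝ) : pd i (pd j f) q = pd j (pd i f) q := by
  have h1 : ∀ y, HasFDerivAt f (fderiv ℝ f y) y := fun y =>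
    ((hf.differentiable (by simp)) y).hasFDerivAt
  have h2 : HasFDerivAt (fderiv ℝ f) (fderiv ℝ (fderiv ℝ f) q) q :=
    ((hf.fderiv_right (m := (⊤ : ℕ∞)) (by simp)).differentiable (by simp) q).hasFDerivAt
  have sym := second_derivative_symmetric h1 h2 (Pi.single i 1) (Pi.single j 1)
  have e1 : pd i (pd j f) q = fderiv ℝ (fderiv ℝ f) q (Pi.single i 1) (Pi.single j 1) := by
    rw [pd, (hasFDerivAt_pd hf j q).fderiv]; rfl
  have e2 : pd j (pd i f) q = fderiv ℝ (fderiv ℝ f) q (Pi.single j 1) (Pi.single i 1) := by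
    rw [pd, (hasFDerivAt_pd hf i q).fderiv]; rfl
  rw [e1, e2, sym]

lemma pd_mul {k : ℕ} {f g : (Fin k → ℝ) → ℝ} (hf : ContDiff ℝ (⊤ : ℕ∞) f) (hg : ContDiff ℝ (⊤ : ℕ∞) g)
    (i : Fin k) (q : Fin k → ℝ) :
    pd i (fun r => f r * g r) q = pd i f q * g q + f q * pd i g q := by
  have := (((hf.differentiable (by simp)) q).hasFDerivAt.mul
    ((hg.differentiable (by simp)) q).hasFDerivAt).fderiv
  rw [pd, show (fun r => f r * g r) = f * g from rfl, this]
  simp [pd]; ring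

lemma fderiv_apply_eq_sum {k : ℕ} {f : (Fin k → ℝ) → ℝ} {p : Fin k → ℝ} (w : Fin k → ℝ) :
    fderiv ℝ f p w = ∑ i, w i * pd i f p :=
  clm_apply_eq_sum (fderiv ℝ f p) w

lemma vfAct_eq_sum {k : ℕ} (X : (Fin k → ℝ) → (Fin k → ℝ)) (f : (Fin k → ℝ) → ℝ) :
    vfAct X f = fun q => ∑ i, X q i * pd i f q := by
  funext q; exact clm_apply_eq_sum (fderiv ℝ f q) (X q)

lemma vfAct_vfAct {k : ℕ} {X Y : (Fin k → ℝ) → (Fin k → ℝ)}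
    (hY : ∀ i, Differentiable ℝ fun q => Y q i)
    {h : (Fin k → ℝ) → ℝ} (hh : ContDiff ℝ (⊤ : ℕ∞) h) (p : Fin k → ℝ) :
    vfAct X (vfAct Y h) p = ∑ i, fderiv ℝ (fun q => Y q i) p (X p) * pd i h p
      + fderiv ℝ (fderiv ℝ h) p (X p) (Y p) := by
  rw [vfAct_eq_sum Y h]
  have hterm : ∀ i : Fin k, HasFDerivAt (fun q => Y q i * pd i h q)
      (Y p i • ((fderiv ℝ (fderiv ℝ h) p).flip (Pi.single i 1))
        + pd i h p • fderiv ℝ (fun q => Y q i) p) p := fun i =>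
    ((hY i p).hasFDerivAt.mul (hasFDerivAt_pd hh i p))
  have hsum : HasFDerivAt (fun q => ∑ i, Y q i * pd i h q)
      (∑ i, (Y p i • ((fderiv ℝ (fderiv ℝ h) p).flip (Pi.single i 1))
        + pd i h p • fderiv ℝ (fun q => Y q i) p)) p :=
    HasFDerivAt.fun_sum fun i _ => hterm i
  rw [vfAct, hsum.fderiv]
  simp only [ContinuousLinearMap.coe_sum', Finset.sum_apply, ContinuousLinearMap.add_apply,
    ContinuousLinearMap.coe_smul', Pi.smul_apply, ContinuousLinearMap.flip_apply,
    smul_eq_mul]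
  rw [Finset.sum_add_distrib]
  have : ∑ i, Y p i * (fderiv ℝ (fderiv ℝ h) p) (X p) (Pi.single i 1)
      = fderiv ℝ (fderiv ℝ h) p (X p) (Y p) := by
    rw [clm_apply_eq_sum (fderiv ℝ (fderiv ℝ h) p (X p)) (Y p)]
  rw [this]
  ring_nf
  congr 1
  exact Finset.sum_congr rfl fun i _ => by ring

lemma bracket_eq {k : ℕ} {X Y : (Fin k → ℝ) → (Fin k → ℝ)}
    (hX : ∀ i, Differentiable ℝ fun q => X q i)
    (hY : ∀ i, Differentiable ℝ fun q => Y q i)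
    {h : (Fin k → ℝ) → ℝ} (hh : ContDiff ℝ (⊤ : ℕ∞) h) (p : Fin k → ℝ) :
    vfAct X (vfAct Y h) p - vfAct Y (vfAct X h) p =
      ∑ i, (fderiv ℝ (fun q => Y q i) p (X p) - fderiv ℝ (fun q => X q i) p (Y p))
        * pd i h p := by
  rw [vfAct_vfAct hY hh p, vfAct_vfAct hX hh p]
  have h1 : ∀ y, HasFDerivAt h (fderiv ℝ h y) y := fun y =>
    ((hh.differentiable (by simp)) y).hasFDerivAt
  have h2 : HasFDerivAt (fderiv ℝ h) (fderiv ℝ (fderiv ℝ h) p) p :=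
    ((hh.fderiv_right (m := (⊤ : ℕ∞)) (by simp)).differentiable (by simp) p).hasFDerivAt
  have sym := second_derivative_symmetric h1 h2 (X p) (Y p)
  rw [sym, add_sub_add_right_eq_sub, ← Finset.sum_sub_distrib]
  exact Finset.sum_congr rfl fun i _ => by ring

-- derivative of composition with the projection
noncomputable def Dc (g : (Fin 3 → ℝ) → ℝ) (r : Fin 4 → ℝ) : (Fin 4 → ℝ) →L[ℝ] ℝ :=
  (fderiv ℝ g (proj34 r)).comp proj34L

lemma hasFDerivAt_Dc {g : (Fin 3 → ℝ) → ℝ} (hg : ContDiff ℝ (⊤ : ℕ∞) g) (r : Fin 4 → ℝ) :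
    HasFDerivAt (fun p => g (proj34 p)) (Dc g r) r := by
  have h1 : HasFDerivAt g (fderiv ℝ g (proj34 r)) (proj34L r) :=
    ((hg.differentiable (by simp)) _).hasFDerivAt
  exact h1.comp r proj34L.hasFDerivAt

lemma Dc_apply (g : (Fin 3 → ℝ) → ℝ) (r : Fin 4 → ℝ) (w : Fin 4 → ℝ) :
    Dc g r w = w 0 * pd 0 g (proj34 r) + w 1 * pd 1 g (proj34 r)
      + w 2 * pd 2 g (proj34 r) := by
  show fderiv ℝ g (proj34 r) (proj34L w) = _
  rw [fderiv_apply_eq_sum, Fin.sum_univ_three]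
  rfl

noncomputable def pr3 : (Fin 4 → ℝ) →L[ℝ] ℝ := ContinuousLinearMap.proj 3

lemma hasFDerivAt_p3 (r : Fin 4 → ℝ) :
    HasFDerivAt (fun p : Fin 4 → ℝ => p 3) pr3 r :=
  pr3.hasFDerivAt

lemma pr3_apply (w : Fin 4 → ℝ) : pr3 w = w 3 := rfl

noncomputable def Ru (u v : (Fin 3 → ℝ) → ℝ) (q : Fin 3 → ℝ) : ℝ :=
  pd 1 (pd 1 u) q + (pd 0 u q * pd 0 u q + u q * pd 0 (pd 0 u) q)
    + pd 0 v q * pd 1 (pd 0 u) q - pd 0 (pd 0 u) q * pd 1 v q - pd 2 (pd 0 u) q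

noncomputable def Rv (u v : (Fin 3 → ℝ) → ℝ) (q : Fin 3 → ℝ) : ℝ :=
  pd 1 (pd 1 v) q + u q * pd 0 (pd 0 v) q
    + pd 0 v q * pd 1 (pd 0 v) q - pd 0 (pd 0 v) q * pd 1 v q - pd 2 (pd 0 v) q

lemma key (u v : (Fin 3 → ℝ) → ℝ) (hu : ContDiff ℝ (⊤ : ℕ∞) u) (hv : ContDiff ℝ (⊤ : ℕ∞) v)
    {h : (Fin 4 → ℝ) → ℝ} (hh : ContDiff ℝ (⊤ : ℕ∞) h) (p : Fin 4 → ℝ) :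
    vfAct (fun p => ![-(p 3 - pd 0 v (proj34 p)), 1, 0, pd 0 u (proj34 p)])
      (vfAct (fun p =>
        ![-((p 3) ^ 2 - pd 0 v (proj34 p) * p 3 + u (proj34 p) - pd 1 v (proj34 p)),
          0, 1, pd 0 u (proj34 p) * p 3 + pd 1 u (proj34 p)]) h) p
    - vfAct (fun p =>
        ![-((p 3) ^ 2 - pd 0 v (proj34 p) * p 3 + u (proj34 p) - pd 1 v (proj34 p)),
          0, 1, pd 0 u (proj34 p) * p 3 + pd 1 u (proj34 p)])
      (vfAct (fun p => ![-(p 3 - pd 0 v (proj34 p)), 1, 0, pd 0 u (proj34 p)]) h) p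
    = Rv u v (proj34 p) * pd 0 h p + Ru u v (proj34 p) * pd 3 h p := by
  have hVx := contDiff_pd 0 hv
  have hVy := contDiff_pd 1 hv
  have hUx := contDiff_pd 0 hu
  have hUy := contDiff_pd 1 hu
  -- derivatives of the nonconstant components
  have h10 : ∀ r, HasFDerivAt (fun p : Fin 4 → ℝ => -(p 3 - pd 0 v (proj34 p)))
      (-(pr3 - Dc (pd 0 v) r)) r :=
    fun r => ((hasFDerivAt_p3 r).sub (hasFDerivAt_Dc hVx r)).neg
  have h13 : ∀ r, HasFDerivAt (fun p : Fin 4 → ℝ => pd 0 u (proj34 p))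
      (Dc (pd 0 u) r) r := fun r => hasFDerivAt_Dc hUx r
  have hsq : ∀ r, HasFDerivAt (fun q : Fin 4 → ℝ => (q 3) ^ 2)
      (r 3 • pr3 + r 3 • pr3) r := fun r => by
    have := (hasFDerivAt_p3 r).mul (hasFDerivAt_p3 r)
    simpa [pow_two, Pi.mul_def] using this
  have h20 : ∀ r, HasFDerivAt (fun p : Fin 4 → ℝ =>
      -((p 3) ^ 2 - pd 0 v (proj34 p) * p 3 + u (proj34 p) - pd 1 v (proj34 p)))
      (-((r 3 • pr3 + r 3 • pr3)
        - (pd 0 v (proj34 r) • pr3 + r 3 • Dc (pd 0 v) r)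
        + Dc u r - Dc (pd 1 v) r)) r :=
    fun r => ((((hsq r).sub ((hasFDerivAt_Dc hVx r).mul (hasFDerivAt_p3 r))).add
      (hasFDerivAt_Dc hu r)).sub (hasFDerivAt_Dc hVy r)).neg
  have h23 : ∀ r, HasFDerivAt (fun p : Fin 4 → ℝ =>
      pd 0 u (proj34 p) * p 3 + pd 1 u (proj34 p))
      ((pd 0 u (proj34 r) • pr3 + r 3 • Dc (pd 0 u) r) + Dc (pd 1 u) r) r :=
    fun r => ((hasFDerivAt_Dc hUx r).mul (hasFDerivAt_p3 r)).add (hasFDerivAt_Dc hUy r)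
  have hXd : ∀ i, Differentiable ℝ (fun q : Fin 4 → ℝ =>
      (![-(q 3 - pd 0 v (proj34 q)), 1, 0, pd 0 u (proj34 q)] : Fin 4 → ℝ) i) := by
    intro i
    fin_cases i
    · exact fun r => (h10 r).differentiableAt
    · exact differentiable_const 1
    · exact differentiable_const 0
    · exact fun r => (h13 r).differentiableAt
  have hYd : ∀ i, Differentiable ℝ (fun q : Fin 4 → ℝ =>
      (![-((q 3) ^ 2 - pd 0 v (proj34 q) * q 3 + u (proj34 q) - pd 1 v (proj34 q)),
        0, 1, pd 0 u (proj34 q) * q 3 + pd 1 u (proj34 q)] : Fin 4 → ℝ) i) := by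
    intro i
    fin_cases i
    · exact fun r => (h20 r).differentiableAt
    · exact differentiable_const 0
    · exact differentiable_const 1
    · exact fun r => (h23 r).differentiableAt
  rw [bracket_eq hXd hYd hh p, Fin.sum_univ_four]
  simp only [Matrix.cons_val_zero, Matrix.cons_val_one, Matrix.cons_val_two,
    Matrix.cons_val_three, Matrix.head_cons, Matrix.tail_cons, Matrix.head_fin_const]
  rw [(h10 p).fderiv, (h13 p).fderiv, (h20 p).fderiv, (h23 p).fderiv]
  simp only [fderiv_const, fderiv_fun_const, Pi.zero_apply, ContinuousLinearMap.zero_apply,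
    ContinuousLinearMap.neg_apply, ContinuousLinearMap.sub_apply,
    ContinuousLinearMap.add_apply, ContinuousLinearMap.coe_smul', Pi.smul_apply,
    pr3_apply, Dc_apply, smul_eq_mul,
    Matrix.cons_val_zero, Matrix.cons_val_one, Matrix.cons_val_two,
    Matrix.cons_val_three, Matrix.head_cons, Matrix.tail_cons]
  rw [pd_comm hv 0 1, pd_comm hu 0 1]
  unfold Ru Rv
  ring

lemma pd_coord (i j : Fin 4) (p : Fin 4 → ℝ) :
    pd i (fun p : Fin 4 → ℝ => p j) p = (Pi.single i 1 : Fin 4 → ℝ) j := by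
  have hd : HasFDerivAt (fun p : Fin 4 → ℝ => p j)
      (ContinuousLinearMap.proj j : (Fin 4 → ℝ) →L[ℝ] ℝ) p := by
    exact hasFDerivAt_apply j p
  rw [pd, hd.fderiv]
  rfl

lemma contDiff_coord (j : Fin 4) : ContDiff ℝ (⊤ : ℕ∞) (fun p : Fin 4 → ℝ => p j) := by
  exact ContinuousLinearMap.contDiff
    (ContinuousLinearMap.proj j : (Fin 4 → ℝ) →L[ℝ] ℝ)

/-- The Lie bracket of the Manakov–Santini Lax pair
`X₁ = ∂_y − (λ − v_x)∂_x + u_x∂_λ`,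
`X₂ = ∂_t − (λ² − v_xλ + u − v_y)∂_x + (u_xλ + u_y)∂_λ`
vanishes identically iff `(u,v)` solves the Manakov–Santini system
`u_{xt} = u_{yy} + (uu_x)_x + v_x u_{xy} − u_{xx} v_y`,
`v_{xt} = v_{yy} + u v_{xx} + v_x v_{xy} − v_{xx} v_y`. -/
theorem stmt2 (u v : (Fin 3 → ℝ) → ℝ)
    (hu : ContDiff ℝ (⊤ : ℕ∞) u) (hv : ContDiff ℝ (⊤ : ℕ∞) v)
    (X₁ X₂ : (Fin 4 → ℝ) → (Fin 4 → ℝ))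
    (hX₁ : X₁ = fun p =>
      ![-(p 3 - pd 0 v (proj34 p)), 1, 0, pd 0 u (proj34 p)])
    (hX₂ : X₂ = fun p =>
      ![-((p 3) ^ 2 - pd 0 v (proj34 p) * p 3 + u (proj34 p) - pd 1 v (proj34 p)),
        0, 1, pd 0 u (proj34 p) * p 3 + pd 1 u (proj34 p)]) :
    (∀ h : (Fin 4 → ℝ) → ℝ, ContDiff ℝ (⊤ : ℕ∞) h → ∀ p : Fin 4 → ℝ,
        vfAct X₁ (vfAct X₂ h) p - vfAct X₂ (vfAct X₁ h) p = 0) ↔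
    (∀ q : Fin 3 → ℝ,
      pd 2 (pd 0 u) q = pd 1 (pd 1 u) q + pd 0 (fun r => u r * pd 0 u r) q
        + pd 0 v q * pd 1 (pd 0 u) q - pd 0 (pd 0 u) q * pd 1 v q ∧
      pd 2 (pd 0 v) q = pd 1 (pd 1 v) q + u q * pd 0 (pd 0 v) q
        + pd 0 v q * pd 1 (pd 0 v) q - pd 0 (pd 0 v) q * pd 1 v q) := by
  subst hX₁ hX₂
  have hmul : ∀ q, pd 0 (fun r => u r * pd 0 u r) q
      = pd 0 u q * pd 0 u q + u q * pd 0 (pd 0 u) q :=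
    fun q => pd_mul hu (contDiff_pd 0 hu) 0 q
  constructor
  · intro H q
    set p : Fin 4 → ℝ := ![q 0, q 1, q 2, 0] with hp
    have hq : proj34 p = q := by
      funext j; fin_cases j <;> rfl
    have e0 := H _ (contDiff_coord 0) p
    rw [key u v hu hv (contDiff_coord 0) p, hq, pd_coord, pd_coord] at e0
    simp only [Pi.single_eq_same, ne_eq, Pi.single_eq_of_ne (by decide : (0:Fin 4) ≠ 3)] at e0
    have e3 := H _ (contDiff_coord 3) p
    rw [key u v hu hv (contDiff_coord 3) p, hq, pd_coord, pd_coord] at e3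
    simp only [Pi.single_eq_same, ne_eq, Pi.single_eq_of_ne (by decide : (3:Fin 4) ≠ 0)] at e3
    -- e0 : Rv u v q = 0 (up to mul), e3 : Ru u v q = 0
    unfold Rv at e0
    unfold Ru at e3
    rw [hmul q]
    constructor <;> nlinarith [e0, e3]
  · intro H h hh p
    rw [key u v hu hv hh p]
    obtain ⟨e1, e2⟩ := H (proj34 p)
    rw [hmul (proj34 p)] at e1
    have hRu : Ru u v (proj34 p) = 0 := by unfold Ru; linarith
    have hRv : Rv u v (proj34 p) = 0 := by unfold Rv; linarith
    rw [hRu, hRv]; ring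
end

section
/- Let u, v : ℝ³ → ℝ be smooth functions of (x, y, t), let A_y, A_t : ℝ³ → Matrix n n ℝ be smooth matrix-valued functions, and set A₃ = A_t − v_x A_y, A = 2A_y, B = A₃. Then the pair of equations (i) −∂_y A_y − (1/2) v_{xx} A_y = (1/2)(−∂_x A₃ − v_{xx} A_y) and (ii) (2u_x − v_{xy}) A_y = 2(∂_t + (v_y − u)∂_x − v_x ∂_y) A_y − ∂_y A₃ − v_{xy} A_y + 2[A₃, A_y] holds if and only if (A, B) satisfies the matrix extension of the Manakov–Santini system: ∂_y A − ∂_x B = 0 and (∂_y + v_x ∂_x)B − (∂_t + (v_y − u)∂_x)A + u_x A + [A, B] = 0. -/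
/-- Entrywise partial derivative of a matrix-valued function. -/
noncomputable def pdM {k N : ℕ} (i : Fin k)
    (A : (Fin k → ℝ) → Matrix (Fin N) (Fin N) ℝ) (p : Fin k → ℝ) :
    Matrix (Fin N) (Fin N) ℝ :=
  Matrix.of fun a b => pd i (fun q => A q a b) p

lemma pd_const_mul {k : ℕ} (i : Fin k) (c : ℝ) (f : (Fin k → ℝ) → ℝ)
    (hf : ContDiff ℝ (⊤ : ℕ∞) f) (q : Fin k → ℝ) :
    pd i (fun p => c * f p) q = c * pd i f q := by
  unfold pd
  rw [fderiv_const_mul ((hf.differentiable (by simp)).differentiableAt)]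
  rfl

/-- Coordinates on `ℝ³`: `x = 0`, `y = 1`, `t = 2`.  With `A₃ = A_t − v_x A_y`,
`A = 2A_y`, `B = A₃`, the second and third frame components of the Yang–Mills–Higgs
equation on the Einstein–Weyl background,
(i) `−∂_y A_y − ½v_{xx}A_y = ½(−∂_x A₃ − v_{xx}A_y)` and
(ii) `(2u_x − v_{xy})A_y = 2(∂_t + (v_y−u)∂_x − v_x∂_y)A_y − ∂_y A₃ − v_{xy}A_y + 2[A₃,A_y]`,
hold iff `(A,B)` satisfies the matrix extension of the Manakov–Santini system. -/
theorem stmt6 {N : ℕ} (u v : (Fin 3 → ℝ) → ℝ)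
    (hu : ContDiff ℝ (⊤ : ℕ∞) u) (hv : ContDiff ℝ (⊤ : ℕ∞) v)
    (Ay At : (Fin 3 → ℝ) → Matrix (Fin N) (Fin N) ℝ)
    (hAy : ∀ a b, ContDiff ℝ (⊤ : ℕ∞) (fun q => Ay q a b))
    (hAt : ∀ a b, ContDiff ℝ (⊤ : ℕ∞) (fun q => At q a b))
    (A₃ A B : (Fin 3 → ℝ) → Matrix (Fin N) (Fin N) ℝ)
    (hA₃ : A₃ = fun q => At q - pd 0 v q • Ay q)
    (hA : A = fun q => (2 : ℝ) • Ay q) (hB : B = A₃) :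
    (∀ q : Fin 3 → ℝ,
      -(pdM 1 Ay q) - ((1 / 2 : ℝ) * pd 0 (pd 0 v) q) • Ay q
        = (1 / 2 : ℝ) • (-(pdM 0 A₃ q) - pd 0 (pd 0 v) q • Ay q) ∧
      (2 * pd 0 u q - pd 1 (pd 0 v) q) • Ay q
        = (2 : ℝ) • (pdM 2 Ay q + (pd 1 v q - u q) • pdM 0 Ay q - pd 0 v q • pdM 1 Ay q)
          - pdM 1 A₃ q - pd 1 (pd 0 v) q • Ay q
          + (2 : ℝ) • (A₃ q * Ay q - Ay q * A₃ q)) ↔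
    (∀ q : Fin 3 → ℝ,
      pdM 1 A q - pdM 0 B q = 0 ∧
      (pdM 1 B q + pd 0 v q • pdM 0 B q)
        - (pdM 2 A q + (pd 1 v q - u q) • pdM 0 A q)
        + pd 0 u q • A q + (A q * B q - B q * A q) = 0) := by
  have hpdA : ∀ (i : Fin 3) (q : Fin 3 → ℝ) (a b : Fin N),
      pdM i A q a b = 2 * pdM i Ay q a b := by
    intro i q a b
    have : (fun p => A p a b) = fun p => 2 * Ay p a b := by
      funext p; simp [hA, Matrix.smul_apply]
    simp only [pdM, Matrix.of_apply, this]
    exact pd_const_mul i 2 _ (hAy a b) q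
  constructor
  · intro h q
    obtain ⟨h1, h2⟩ := h q
    constructor
    · ext a b
      have h1ab := Matrix.ext_iff.2 h1 a b
      simp only [Matrix.sub_apply, Matrix.add_apply, Matrix.neg_apply, Matrix.smul_apply,
        smul_eq_mul, Matrix.zero_apply, hB] at h1ab ⊢
      rw [hpdA]
      linarith
    · ext a b
      have h1ab := Matrix.ext_iff.2 h1 a b
      have h2ab := Matrix.ext_iff.2 h2 a b
      simp only [hB, Matrix.sub_apply, Matrix.add_apply, Matrix.neg_apply, Matrix.smul_apply,
        smul_eq_mul, Matrix.zero_apply] at h1ab h2ab ⊢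
      simp only [hpdA] at h1ab h2ab ⊢
      simp only [hA, smul_mul_assoc, mul_smul_comm, Matrix.smul_apply, smul_eq_mul] at h1ab h2ab ⊢
      linear_combination 2 * pd 0 v q * h1ab + h2ab
  · intro h q
    obtain ⟨h1, h2⟩ := h q
    constructor
    · ext a b
      have h1ab := Matrix.ext_iff.2 h1 a b
      simp only [hB, Matrix.sub_apply, Matrix.add_apply, Matrix.neg_apply, Matrix.smul_apply,
        smul_eq_mul, Matrix.zero_apply] at h1ab ⊢
      simp only [hpdA] at h1ab ⊢
      linarith
    · ext a b
      have h1ab := Matrix.ext_iff.2 h1 a b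
      have h2ab := Matrix.ext_iff.2 h2 a b
      simp only [hB, Matrix.sub_apply, Matrix.add_apply, Matrix.neg_apply, Matrix.smul_apply,
        smul_eq_mul, Matrix.zero_apply] at h1ab h2ab ⊢
      simp only [hpdA] at h1ab h2ab ⊢
      simp only [hA, smul_mul_assoc, mul_smul_comm, Matrix.smul_apply, smul_eq_mul] at h1ab h2ab ⊢
      linear_combination h2ab + pd 0 v q * h1ab
end
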